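/- arXiv:2012.05573 — 3 statements merged into one kernel-verified Lean document; each statement's English description precedes it below -/
import Mathlib

section
/- Let ρ be a density matrix on a finite-dimensional space S, σ a density matrix on a finite-dimensional space C, and U a unitary on S⊗C such that Tr_S[U(ρ⊗σ)U†] = σ. Then the output state ρ'' = Tr_C[U(ρ⊗σ)U†] satisfies H(ρ'') ≥ H(ρ). -/
open Matrix BigOperators
open scoped Kronecker ComplexOrder

/-- A density matrix: positive semidefinite with trace 1. -/
def IsDensityMatrix {n : Type*} [Fintype n] [DecidableEq n] (ρ : Matrix n n ℂ) : Prop :=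
  ρ.PosSemidef ∧ ρ.trace = 1

/-- The von Neumann entropy `H(ρ) = -Tr[ρ log ρ]`, computed via the eigenvalues of `ρ`
(with the convention `0 log 0 = 0`). -/
noncomputable def vnEntropy {n : Type*} [Fintype n] [DecidableEq n] (ρ : Matrix n n ℂ) : ℝ :=
  if h : ρ.IsHermitian then -∑ i, h.eigenvalues i * Real.log (h.eigenvalues i) else 0

/-- Partial trace over the first (system) tensor factor. -/
noncomputable def ptraceS {s c : Type*} [Fintype s] [Fintype c]
    (M : Matrix (s × c) (s × c) ℂ) : Matrix c c ℂ :=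
  Matrix.of fun i j => ∑ k, M (k, i) (k, j)

/-- Partial trace over the second (catalyst) tensor factor. -/
noncomputable def ptraceC {s c : Type*} [Fintype s] [Fintype c]
    (M : Matrix (s × c) (s × c) ℂ) : Matrix s s ℂ :=
  Matrix.of fun i j => ∑ k, M (i, k) (j, k)

/-! With `τ = U (ρ ⊗ σ) U†`, additivity and unitary invariance give `H(ρ) + H(σ) = H(τ)`, and
subadditivity gives `H(τ) ≤ H(Tr_C τ) + H(Tr_S τ) = H(Tr_C τ) + H(σ)`.

Subadditivity is proved in the product `A ⊗ B` of eigenbases of the two marginals. The diagonal of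
`τ` in that basis is the spectrum of `τ` transformed by the doubly stochastic matrix of squared
moduli of the unitary relating the two bases, so by concavity of `-x log x` its Shannon entropy is
at least `H(τ)`. By Gibbs' inequality that Shannon entropy is at most the sum of the entropies of
its two marginals, and these marginals are exactly the spectra of `Tr_C τ` and `Tr_S τ`. -/

open Real

section Spectral

variable {n : Type*} [Fintype n] [DecidableEq n]

lemma Matrix.IsHermitian.vnEntropy_eq {X : Matrix n n ℂ} (hX : X.IsHermitian) :
    vnEntropy X = ∑ i, negMulLog (hX.eigenvalues i) := by
  simp [vnEntropy, hX, negMulLog]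

lemma Matrix.IsHermitian.eq_eigenvectorUnitary_mul_diagonal_mul {X : Matrix n n ℂ}
    (hX : X.IsHermitian) :
    X = (hX.eigenvectorUnitary : Matrix n n ℂ) * diagonal (RCLike.ofReal ∘ hX.eigenvalues) *
      (hX.eigenvectorUnitary : Matrix n n ℂ)ᴴ := by
  conv_lhs => rw [hX.spectral_theorem, Unitary.conjStarAlgAut_apply, star_eq_conjTranspose]

lemma Matrix.IsHermitian.conjTranspose_eigenvectorUnitary_mul_mul {X : Matrix n n ℂ}
    (hX : X.IsHermitian) :
    (hX.eigenvectorUnitary : Matrix n n ℂ)ᴴ * X * (hX.eigenvectorUnitary : Matrix n n ℂ) =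
      diagonal (RCLike.ofReal ∘ hX.eigenvalues) := by
  simpa [Unitary.conjStarAlgAut_apply, star_eq_conjTranspose] using
    hX.conjStarAlgAut_star_eigenvectorUnitary

open Polynomial in
lemma vnEntropy_unitary_mul_diagonal_mul {W : Matrix n n ℂ} (hW : W ∈ unitaryGroup n ℂ)
    (f : n → ℝ) : vnEntropy (W * diagonal (RCLike.ofReal ∘ f) * Wᴴ) = ∑ i, negMulLog (f i) := by
  have hX : (W * diagonal (RCLike.ofReal ∘ f) * Wᴴ).IsHermitian :=
    isHermitian_mul_mul_conjTranspose W (isHermitian_diagonal_iff.mpr fun i => RCLike.conj_ofReal _)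
  have hcharpoly : (W * diagonal (RCLike.ofReal ∘ f) * Wᴴ).charpoly =
      ((Finset.univ.val.map (RCLike.ofReal ∘ f)).map fun a => X - C a).prod := by
    rw [charpoly_mul_comm, ← Matrix.mul_assoc, ← star_eq_conjTranspose,
      (mem_unitaryGroup_iff'.mp hW), Matrix.one_mul, charpoly_diagonal, Multiset.map_map]
    rfl
  have hspec : Finset.univ.val.map hX.eigenvalues = Finset.univ.val.map f := by
    have := hX.roots_charpoly_eq_eigenvalues
    rw [hcharpoly, roots_multiset_prod_X_sub_C, ← Multiset.map_map, ← Multiset.map_map] at this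
    exact Multiset.map_injective Complex.ofReal_injective this.symm
  have := congrArg (fun s => (s.map negMulLog).sum) hspec
  simp only [Multiset.map_map] at this
  rw [hX.vnEntropy_eq, Finset.sum_eq_multiset_sum, Finset.sum_eq_multiset_sum]
  exact this

lemma Matrix.IsHermitian.vnEntropy_unitary_mul_mul {X U : Matrix n n ℂ} (hX : X.IsHermitian)
    (hU : U ∈ unitaryGroup n ℂ) : vnEntropy (U * X * Uᴴ) = vnEntropy X := by
  set V := (hX.eigenvectorUnitary : Matrix n n ℂ)
  have hUV : U * V ∈ unitaryGroup n ℂ := mul_mem hU hX.eigenvectorUnitary.2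
  have hconj : U * X * Uᴴ = U * V * diagonal (RCLike.ofReal ∘ hX.eigenvalues) * (U * V)ᴴ := by
    conv_lhs => rw [hX.eq_eigenvectorUnitary_mul_diagonal_mul]
    simp only [V, conjTranspose_mul, Matrix.mul_assoc]
  rw [hconj, vnEntropy_unitary_mul_diagonal_mul hUV, hX.vnEntropy_eq]

lemma Matrix.IsHermitian.sum_eigenvalues_eq_one {X : Matrix n n ℂ} (hX : X.IsHermitian)
    (htr : X.trace = 1) : ∑ i, hX.eigenvalues i = 1 := by
  simpa [htr] using congrArg Complex.re hX.trace_eq_sum_eigenvalues.symm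

end Spectral

lemma vnEntropy_kronecker {s c : Type*} [Fintype s] [DecidableEq s] [Fintype c] [DecidableEq c]
    {A : Matrix s s ℂ} {B : Matrix c c ℂ} (hA : A.IsHermitian) (hB : B.IsHermitian)
    (hAtr : A.trace = 1) (hBtr : B.trace = 1) :
    vnEntropy (A ⊗ₖ B) = vnEntropy A + vnEntropy B := by
  set VA := (hA.eigenvectorUnitary : Matrix s s ℂ)
  set VB := (hB.eigenvectorUnitary : Matrix c c ℂ)
  have hV : VA ⊗ₖ VB ∈ unitaryGroup (s × c) ℂ :=
    kronecker_mem_unitary hA.eigenvectorUnitary.2 hB.eigenvectorUnitary.2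
  have hdiag : A ⊗ₖ B = VA ⊗ₖ VB *
      diagonal (RCLike.ofReal ∘ fun x => hA.eigenvalues x.1 * hB.eigenvalues x.2) *
      (VA ⊗ₖ VB)ᴴ := by
    conv_lhs => rw [hA.eq_eigenvectorUnitary_mul_diagonal_mul,
      hB.eq_eigenvectorUnitary_mul_diagonal_mul]
    rw [conjTranspose_kronecker, mul_kronecker_mul, mul_kronecker_mul,
      diagonal_kronecker_diagonal]
    simp [VA, VB, Function.comp_def]
  rw [hdiag, vnEntropy_unitary_mul_diagonal_mul hV, Fintype.sum_prod_type, hA.vnEntropy_eq,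
    hB.vnEntropy_eq]
  simp only [negMulLog_mul, Finset.sum_add_distrib, ← Finset.sum_mul, ← Finset.mul_sum,
    hA.sum_eigenvalues_eq_one hAtr, hB.sum_eigenvalues_eq_one hBtr]
  ring

section DoublyStochastic

variable {n : Type*} [Fintype n] [DecidableEq n]

lemma sum_negMulLog_le_sum_negMulLog_vecMul {C : Matrix n n ℝ} (hC : C ∈ doublyStochastic ℝ n)
    {r : n → ℝ} (hr : ∀ i, 0 ≤ r i) :
    ∑ i, negMulLog (r i) ≤ ∑ j, negMulLog ((r ᵥ* C) j) := by
  have hjensen : ∀ j, ∑ i, C i j * negMulLog (r i) ≤ negMulLog ((r ᵥ* C) j) := fun j => by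
    simpa [vecMul, dotProduct, mul_comm] using concaveOn_negMulLog.le_map_sum
      (fun i _ => nonneg_of_mem_doublyStochastic hC) (sum_col_of_mem_doublyStochastic hC j)
      (fun i _ => Set.mem_Ici.mpr (hr i))
  calc ∑ i, negMulLog (r i) = ∑ j, ∑ i, C i j * negMulLog (r i) := by
        rw [Finset.sum_comm]
        simp [← Finset.sum_mul, sum_row_of_mem_doublyStochastic hC]
    _ ≤ ∑ j, negMulLog ((r ᵥ* C) j) := Finset.sum_le_sum fun j _ => hjensen j

lemma map_normSq_mem_doublyStochastic {M : Matrix n n ℂ} (hM : M ∈ unitaryGroup n ℂ) :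
    M.map Complex.normSq ∈ doublyStochastic ℝ n := by
  rw [mem_doublyStochastic_iff_sum]
  refine ⟨fun i j => Complex.normSq_nonneg _, fun i => ?_, fun j => ?_⟩
  · apply Complex.ofReal_injective
    simpa [mul_apply, Complex.mul_conj] using congrFun₂ (mem_unitaryGroup_iff.mp hM) i i
  · apply Complex.ofReal_injective
    simpa [mul_apply, Complex.normSq_eq_conj_mul_self] using
      congrFun₂ (mem_unitaryGroup_iff'.mp hM) j j

lemma conjTranspose_mul_diagonal_mul_apply_self (M : Matrix n n ℂ) (r : n → ℝ) (x : n) :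
    (Mᴴ * diagonal (RCLike.ofReal ∘ r) * M : Matrix n n ℂ) x x =
      ((r ᵥ* M.map Complex.normSq) x : ℂ) := by
  simp [mul_apply, diagonal_apply, vecMul, dotProduct, Complex.normSq_eq_conj_mul_self,
    mul_comm, mul_left_comm]

end DoublyStochastic

noncomputable def diagEntropy {n : Type*} [Fintype n] (X : Matrix n n ℂ) : ℝ :=
  ∑ i, negMulLog (X i i).re

section DiagEntropy

variable {n : Type*} [Fintype n] [DecidableEq n]

lemma Matrix.IsHermitian.diagEntropy_conj_eigenvectorUnitary {X : Matrix n n ℂ}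
    (hX : X.IsHermitian) :
    diagEntropy ((hX.eigenvectorUnitary : Matrix n n ℂ)ᴴ * X *
      (hX.eigenvectorUnitary : Matrix n n ℂ)) = vnEntropy X := by
  simp [diagEntropy, hX.conjTranspose_eigenvectorUnitary_mul_mul, hX.vnEntropy_eq]

lemma Matrix.PosSemidef.vnEntropy_le_diagEntropy {X W : Matrix n n ℂ} (hX : X.PosSemidef)
    (hW : W ∈ unitaryGroup n ℂ) : vnEntropy X ≤ diagEntropy (Wᴴ * X * W) := by
  set V := (hX.1.eigenvectorUnitary : Matrix n n ℂ)
  have hM : Vᴴ * W ∈ unitaryGroup n ℂ := mul_mem (Unitary.star_mem hX.1.eigenvectorUnitary.2) hW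
  have hconj : Wᴴ * X * W =
      (Vᴴ * W)ᴴ * diagonal (RCLike.ofReal ∘ hX.1.eigenvalues) * (Vᴴ * W) := by
    conv_lhs => rw [hX.1.eq_eigenvectorUnitary_mul_diagonal_mul]
    simp only [V, conjTranspose_mul, conjTranspose_conjTranspose, Matrix.mul_assoc]
  rw [hX.1.vnEntropy_eq, diagEntropy, hconj]
  simp only [conjTranspose_mul_diagonal_mul_apply_self, Complex.ofReal_re]
  exact sum_negMulLog_le_sum_negMulLog_vecMul (map_normSq_mem_doublyStochastic hM)
    hX.eigenvalues_nonneg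

end DiagEntropy

lemma mul_log_le_mul_log_add_sub {m t : ℝ} (hm : 0 ≤ m) (hmt : t = 0 → m = 0) (ht : 0 ≤ t) :
    m * log t ≤ m * log m + t - m := by
  rcases hm.eq_or_lt with rfl | hm_pos
  · simpa using ht
  have ht_pos : 0 < t := ht.lt_of_ne fun h => hm_pos.ne' (hmt h.symm)
  have h := mul_le_mul_of_nonneg_left (log_le_sub_one_of_pos (div_pos ht_pos hm_pos)) hm
  rw [log_div ht_pos.ne' hm_pos.ne', mul_sub, mul_sub, mul_div_cancel₀ _ hm_pos.ne'] at h
  linarith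

section Bipartite

variable {s c : Type*} [Fintype s] [Fintype c]

lemma sum_negMulLog_le_sum_negMulLog_marginals {m : s × c → ℝ} (hm : ∀ x, 0 ≤ m x)
    (hsum : ∑ x, m x = 1) :
    ∑ x, negMulLog (m x) ≤ ∑ a, negMulLog (∑ b, m (a, b)) + ∑ b, negMulLog (∑ a, m (a, b)) := by
  set p : s → ℝ := fun a => ∑ b, m (a, b)
  set q : c → ℝ := fun b => ∑ a, m (a, b)
  have hmp : ∀ x, m x ≤ p x.1 := fun x =>
    Finset.single_le_sum (f := fun b => m (x.1, b)) (fun b _ => hm _) (Finset.mem_univ x.2)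
  have hmq : ∀ x, m x ≤ q x.2 := fun x =>
    Finset.single_le_sum (f := fun a => m (a, x.2)) (fun a _ => hm _) (Finset.mem_univ x.1)
  have hgibbs : ∀ x, m x * log (p x.1 * q x.2) ≤ m x * log (m x) + p x.1 * q x.2 - m x :=
    fun x => mul_log_le_mul_log_add_sub (hm x)
      (fun h => by rcases mul_eq_zero.mp h with h | h <;> linarith [hm x, hmp x, hmq x])
      (mul_nonneg ((hm x).trans (hmp x)) ((hm x).trans (hmq x)))
  have hlog : ∀ x, m x * log (p x.1 * q x.2) = m x * log (p x.1) + m x * log (q x.2) := by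
    intro x
    rcases (hm x).eq_or_lt with h | h
    · simp [← h]
    · rw [log_mul (h.trans_le (hmp x)).ne' (h.trans_le (hmq x)).ne', mul_add]
  have hp_sum : ∑ a, p a = 1 := by rw [← hsum, Fintype.sum_prod_type]
  have hq_sum : ∑ b, q b = 1 := by rw [← hsum, Fintype.sum_prod_type_right]
  have hpq_sum : ∑ x : s × c, p x.1 * q x.2 = 1 := by
    rw [Fintype.sum_prod_type, ← Finset.sum_mul_sum, hp_sum, hq_sum, one_mul]
  have hp_log : ∑ x : s × c, m x * log (p x.1) = ∑ a, p a * log (p a) := by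
    simp only [Fintype.sum_prod_type, ← Finset.sum_mul, p]
  have hq_log : ∑ x : s × c, m x * log (q x.2) = ∑ b, q b * log (q b) := by
    simp only [Fintype.sum_prod_type_right, ← Finset.sum_mul, q]
  have := Finset.sum_le_sum fun x (_ : x ∈ Finset.univ) => hgibbs x
  simp only [hlog, Finset.sum_add_distrib, Finset.sum_sub_distrib, hp_log, hq_log, hpq_sum,
    hsum] at this
  simp only [negMulLog, neg_mul, Finset.sum_neg_distrib]
  linarith

lemma Matrix.PosSemidef.diagEntropy_le_ptraceC_add_ptraceS {Y : Matrix (s × c) (s × c) ℂ}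
    (hY : Y.PosSemidef) (htr : Y.trace = 1) :
    diagEntropy Y ≤ diagEntropy (ptraceC Y) + diagEntropy (ptraceS Y) := by
  have hsum : ∑ x, (Y x x).re = 1 := by simpa [trace, Complex.re_sum] using congrArg Complex.re htr
  simpa [diagEntropy, ptraceC, ptraceS, Complex.re_sum] using
    sum_negMulLog_le_sum_negMulLog_marginals (fun x => (Complex.nonneg_iff.mp hY.diag_nonneg).1)
      hsum

lemma Matrix.IsHermitian.ptraceC {X : Matrix (s × c) (s × c) ℂ} (hX : X.IsHermitian) :
    (ptraceC X).IsHermitian := by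
  ext i j
  simp only [conjTranspose_apply, _root_.ptraceC, of_apply, star_sum]
  exact Finset.sum_congr rfl fun k _ => by simpa using congrFun₂ hX (i, k) (j, k)

lemma Matrix.IsHermitian.ptraceS {X : Matrix (s × c) (s × c) ℂ} (hX : X.IsHermitian) :
    (ptraceS X).IsHermitian := by
  ext i j
  simp only [conjTranspose_apply, _root_.ptraceS, of_apply, star_sum]
  exact Finset.sum_congr rfl fun k _ => by simpa using congrFun₂ hX (k, i) (k, j)

lemma trace_ptraceC_mul [DecidableEq c] (X : Matrix (s × c) (s × c) ℂ) (N : Matrix s s ℂ) :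
    (ptraceC X * N).trace = (X * (N ⊗ₖ (1 : Matrix c c ℂ))).trace := by
  simp only [trace, ptraceC, diag_apply, mul_apply, of_apply, Finset.sum_mul, kroneckerMap_apply,
    one_apply, mul_ite, mul_one, mul_zero, Fintype.sum_prod_type, Finset.sum_ite_eq',
    Finset.mem_univ, ↓reduceIte]
  exact Finset.sum_congr rfl fun a _ => Finset.sum_comm

lemma trace_ptraceS_mul [DecidableEq s] (X : Matrix (s × c) (s × c) ℂ) (N : Matrix c c ℂ) :
    (ptraceS X * N).trace = (X * ((1 : Matrix s s ℂ) ⊗ₖ N)).trace := by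
  simp only [trace, ptraceS, diag_apply, mul_apply, of_apply, Finset.sum_mul, kroneckerMap_apply,
    one_apply, ite_mul, one_mul, zero_mul, mul_ite, mul_zero, Fintype.sum_prod_type,
    Finset.sum_ite_irrel, Finset.sum_const_zero, Finset.sum_ite_eq', Finset.mem_univ, ↓reduceIte]
  rw [Finset.sum_congr rfl fun i _ => Finset.sum_comm, Finset.sum_comm]

lemma trace_conjTranspose_mul_mul_mul {n : Type*} [Fintype n] (W X M : Matrix n n ℂ) :
    (Wᴴ * X * W * M).trace = (X * (W * M * Wᴴ)).trace := by
  simp only [Matrix.mul_assoc]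
  rw [trace_mul_comm]
  simp only [Matrix.mul_assoc]

lemma ptraceC_conjTranspose_kronecker_mul_mul [DecidableEq c] {A : Matrix s s ℂ}
    {B : Matrix c c ℂ} (hB : B ∈ unitaryGroup c ℂ) (X : Matrix (s × c) (s × c) ℂ) :
    ptraceC ((A ⊗ₖ B)ᴴ * X * (A ⊗ₖ B)) = Aᴴ * ptraceC X * A := by
  refine ext_iff_trace_mul_right.mpr fun N => ?_
  rw [trace_ptraceC_mul, trace_conjTranspose_mul_mul_mul, trace_conjTranspose_mul_mul_mul,
    trace_ptraceC_mul, conjTranspose_kronecker, ← mul_kronecker_mul, ← mul_kronecker_mul,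
    Matrix.mul_one, ← star_eq_conjTranspose B, mem_unitaryGroup_iff.mp hB]

lemma ptraceS_conjTranspose_kronecker_mul_mul [DecidableEq s] {A : Matrix s s ℂ}
    {B : Matrix c c ℂ} (hA : A ∈ unitaryGroup s ℂ) (X : Matrix (s × c) (s × c) ℂ) :
    ptraceS ((A ⊗ₖ B)ᴴ * X * (A ⊗ₖ B)) = Bᴴ * ptraceS X * B := by
  refine ext_iff_trace_mul_right.mpr fun N => ?_
  rw [trace_ptraceS_mul, trace_conjTranspose_mul_mul_mul, trace_conjTranspose_mul_mul_mul,
    trace_ptraceS_mul, conjTranspose_kronecker, ← mul_kronecker_mul, ← mul_kronecker_mul,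
    Matrix.mul_one, ← star_eq_conjTranspose A, mem_unitaryGroup_iff.mp hA]

theorem Matrix.PosSemidef.vnEntropy_le_ptraceC_add_ptraceS [DecidableEq s] [DecidableEq c]
    {τ : Matrix (s × c) (s × c) ℂ} (hτ : τ.PosSemidef) (htr : τ.trace = 1) :
    vnEntropy τ ≤ vnEntropy (ptraceC τ) + vnEntropy (ptraceS τ) := by
  have hC := hτ.1.ptraceC
  have hS := hτ.1.ptraceS
  set A := (hC.eigenvectorUnitary : Matrix s s ℂ)
  set B := (hS.eigenvectorUnitary : Matrix c c ℂ)
  have hW : A ⊗ₖ B ∈ unitaryGroup (s × c) ℂ :=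
    kronecker_mem_unitary hC.eigenvectorUnitary.2 hS.eigenvectorUnitary.2
  have hWtr : ((A ⊗ₖ B)ᴴ * τ * (A ⊗ₖ B)).trace = 1 := by
    rw [trace_mul_cycle, ← star_eq_conjTranspose, mem_unitaryGroup_iff.mp hW, Matrix.one_mul, htr]
  calc vnEntropy τ ≤ diagEntropy ((A ⊗ₖ B)ᴴ * τ * (A ⊗ₖ B)) := hτ.vnEntropy_le_diagEntropy hW
    _ ≤ diagEntropy (ptraceC ((A ⊗ₖ B)ᴴ * τ * (A ⊗ₖ B))) +
          diagEntropy (ptraceS ((A ⊗ₖ B)ᴴ * τ * (A ⊗ₖ B))) :=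
        (hτ.conjTranspose_mul_mul_same _).diagEntropy_le_ptraceC_add_ptraceS hWtr
    _ = vnEntropy (ptraceC τ) + vnEntropy (ptraceS τ) := by
        rw [ptraceC_conjTranspose_kronecker_mul_mul hS.eigenvectorUnitary.2,
          ptraceS_conjTranspose_kronecker_mul_mul hC.eigenvectorUnitary.2,
          hC.diagEntropy_conj_eigenvectorUnitary, hS.diagEntropy_conj_eigenvectorUnitary]

end Bipartite

/-- If a unitary on system⊗catalyst preserves the catalyst's reduced state exactly,
then the von Neumann entropy of the system's output state is at least that of the input. -/
theorem entropy_nondecreasing_under_catalytic_unitary {dS dC : ℕ}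
    (ρ : Matrix (Fin dS) (Fin dS) ℂ) (σ : Matrix (Fin dC) (Fin dC) ℂ)
    (hρ : IsDensityMatrix ρ) (hσ : IsDensityMatrix σ)
    (U : Matrix (Fin dS × Fin dC) (Fin dS × Fin dC) ℂ)
    (hU : U ∈ Matrix.unitaryGroup (Fin dS × Fin dC) ℂ)
    (hcat : ptraceS (U * (ρ ⊗ₖ σ) * Uᴴ) = σ) :
    vnEntropy ρ ≤ vnEntropy (ptraceC (U * (ρ ⊗ₖ σ) * Uᴴ)) := by
  obtain ⟨hρ_psd, hρ_tr⟩ := hρ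
  obtain ⟨hσ_psd, hσ_tr⟩ := hσ
  have hprod := hρ_psd.kronecker hσ_psd
  have hout_tr : (U * (ρ ⊗ₖ σ) * Uᴴ).trace = 1 := by
    rw [trace_mul_cycle, ← star_eq_conjTranspose, mem_unitaryGroup_iff'.mp hU, Matrix.one_mul,
      trace_kronecker, hρ_tr, hσ_tr, mul_one]
  have hsub := (hprod.mul_mul_conjTranspose_same U).vnEntropy_le_ptraceC_add_ptraceS hout_tr
  rw [hprod.1.vnEntropy_unitary_mul_mul hU, vnEntropy_kronecker hρ_psd.1 hσ_psd.1 hρ_tr hσ_tr,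
    hcat] at hsub
  linarith
end

section
/- Let p⃗ be a probability vector in ℝ^d, q⃗ a probability vector in ℝ^{d_C}, and π a permutation matrix on ℝ^d ⊗ ℝ^{d_C} such that Tr_S[π(p⃗ ⊗ q⃗)] = q⃗. Then the output marginal p⃗'' = Tr_C[π(p⃗ ⊗ q⃗)] satisfies H(p⃗'') ≥ H(p⃗). -/
open BigOperators

/-- A probability vector: nonnegative entries summing to 1. -/
def IsProbVec {D : Type*} [Fintype D] (p : D → ℝ) : Prop :=
  (∀ i, 0 ≤ p i) ∧ ∑ i, p i = 1

/-- The Shannon entropy `H(p) = -Σⱼ pⱼ log pⱼ` (with the convention `0 log 0 = 0`). -/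
noncomputable def shannonEntropy {D : Type*} [Fintype D] (p : D → ℝ) : ℝ :=
  -∑ i, p i * Real.log (p i)

/-- The total variation distance `D(p,q) = ½ Σⱼ |pⱼ - qⱼ|`. -/
noncomputable def tvDist {D : Type*} [Fintype D] (p q : D → ℝ) : ℝ :=
  (1 / 2) * ∑ i, |p i - q i|

/-- Marginal on the first (system) factor, i.e. `Tr_C`. -/
def margC {a b : Type*} [Fintype a] [Fintype b] (r : a × b → ℝ) : a → ℝ :=
  fun i => ∑ j, r (i, j)

/-- Marginal on the second (catalyst) factor, i.e. `Tr_S`. -/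
def margS {a b : Type*} [Fintype a] [Fintype b] (r : a × b → ℝ) : b → ℝ :=
  fun j => ∑ i, r (i, j)
/-- Subadditivity key lemma. -/
lemma subadd_aux {a b : Type*} [Fintype a] [Fintype b] (r : a × b → ℝ)
    (hr : ∀ x, 0 ≤ r x) (hsum : ∑ x, r x = 1) :
    (-∑ x, r x * Real.log (r x)) ≤
      (-∑ i, (∑ j, r (i, j)) * Real.log (∑ j, r (i, j))) +
      (-∑ j, (∑ i, r (i, j)) * Real.log (∑ i, r (i, j))) := by
  set A : a → ℝ := fun i => ∑ j, r (i, j) with hA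
  set B : b → ℝ := fun j => ∑ i, r (i, j) with hB
  have hA0 : ∀ i, 0 ≤ A i := fun i => Finset.sum_nonneg fun j _ => hr _
  have hB0 : ∀ j, 0 ≤ B j := fun j => Finset.sum_nonneg fun i _ => hr _
  have hAsum : ∑ i, A i = 1 := by rw [← hsum, Fintype.sum_prod_type]
  have hBsum : ∑ j, B j = 1 := by
    rw [← hsum, Fintype.sum_prod_type]; exact Finset.sum_comm
  have hle : ∀ x : a × b, r x ≤ A x.1 := by
    intro x
    calc r x = r (x.1, x.2) := by rw [Prod.mk.eta]
    _ ≤ A x.1 := Finset.single_le_sum (fun j _ => hr _) (Finset.mem_univ x.2)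
  have hle' : ∀ x : a × b, r x ≤ B x.2 := by
    intro x
    calc r x = r (x.1, x.2) := by rw [Prod.mk.eta]
    _ ≤ B x.2 := Finset.single_le_sum (f := fun i => r (i, x.2)) (fun i _ => hr _)
        (Finset.mem_univ x.1)
  -- pointwise inequality
  have key : ∀ x : a × b,
      r x * Real.log (A x.1) + r x * Real.log (B x.2) - r x * Real.log (r x)
        ≤ A x.1 * B x.2 - r x := by
    intro x
    rcases eq_or_lt_of_le (hr x) with h0 | hpos
    · rw [← h0]; simp [mul_nonneg (hA0 x.1) (hB0 x.2)]
    · have hApos : 0 < A x.1 := lt_of_lt_of_le hpos (hle x)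
      have hBpos : 0 < B x.2 := lt_of_lt_of_le hpos (hle' x)
      have : Real.log (A x.1 * B x.2 / r x) ≤ A x.1 * B x.2 / r x - 1 :=
        Real.log_le_sub_one_of_pos (by positivity)
      have h2 : r x * Real.log (A x.1 * B x.2 / r x) ≤ A x.1 * B x.2 - r x := by
        have := mul_le_mul_of_nonneg_left this (le_of_lt hpos)
        calc r x * Real.log (A x.1 * B x.2 / r x) ≤ r x * (A x.1 * B x.2 / r x - 1) := this
          _ = A x.1 * B x.2 - r x := by field_simp
      calc r x * Real.log (A x.1) + r x * Real.log (B x.2) - r x * Real.log (r x)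
          = r x * Real.log (A x.1 * B x.2 / r x) := by
            rw [Real.log_div (by positivity) (ne_of_gt hpos),
              Real.log_mul (ne_of_gt hApos) (ne_of_gt hBpos)]; ring
        _ ≤ A x.1 * B x.2 - r x := h2
  have hsum_key : ∑ x : a × b,
      (r x * Real.log (A x.1) + r x * Real.log (B x.2) - r x * Real.log (r x))
        ≤ ∑ x : a × b, (A x.1 * B x.2 - r x) :=
    Finset.sum_le_sum fun x _ => key x
  have hRHS : ∑ x : a × b, (A x.1 * B x.2 - r x) = 0 := by
    rw [Finset.sum_sub_distrib, hsum, Fintype.sum_prod_type]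
    simp [← Finset.mul_sum, hBsum, hAsum]
  -- expand marginals times logs
  have hAlog : ∑ i, A i * Real.log (A i) = ∑ x : a × b, r x * Real.log (A x.1) := by
    rw [Fintype.sum_prod_type]
    exact Finset.sum_congr rfl fun i _ => by rw [hA, Finset.sum_mul]
  have hBlog : ∑ j, B j * Real.log (B j) = ∑ x : a × b, r x * Real.log (B x.2) := by
    rw [Fintype.sum_prod_type, Finset.sum_comm]
    exact Finset.sum_congr rfl fun j _ => by rw [hB, Finset.sum_mul]
  rw [hAlog, hBlog]
  have := hsum_key.trans_eq hRHS
  rw [Finset.sum_sub_distrib, Finset.sum_add_distrib] at this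
  linarith

/-- Subadditivity of Shannon entropy. -/
lemma subadd {a b : Type*} [Fintype a] [Fintype b] (r : a × b → ℝ)
    (hr : ∀ x, 0 ≤ r x) (hsum : ∑ x, r x = 1) :
    shannonEntropy r ≤ shannonEntropy (margC r) + shannonEntropy (margS r) := by
  simpa [shannonEntropy, margC, margS] using subadd_aux r hr hsum

/-- Additivity of `x * log x` over products. -/
lemma add_aux {a b : Type*} [Fintype a] [Fintype b] (p : a → ℝ) (q : b → ℝ) :
    ∑ x : a × b, (p x.1 * q x.2) * Real.log (p x.1 * q x.2)
      = (∑ j, q j) * (∑ i, p i * Real.log (p i))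
        + (∑ i, p i) * (∑ j, q j * Real.log (q j)) := by
  have key : ∀ x : a × b, (p x.1 * q x.2) * Real.log (p x.1 * q x.2)
      = q x.2 * (p x.1 * Real.log (p x.1)) + p x.1 * (q x.2 * Real.log (q x.2)) := by
    intro x
    rcases eq_or_ne (p x.1) 0 with h | h
    · simp [h]
    rcases eq_or_ne (q x.2) 0 with h' | h'
    · simp [h']
    rw [Real.log_mul h h']; ring
  rw [Fintype.sum_congr _ _ key, Fintype.sum_prod_type]
  simp only [Finset.sum_add_distrib, ← Finset.mul_sum, ← Finset.sum_mul]

/-- If a permutation of system⊗catalyst preserves the catalyst's marginal exactly, then the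
Shannon entropy of the system's output marginal is at least that of the input. -/
theorem classical_entropy_nondecreasing_under_catalytic_permutation {d dC : ℕ}
    (p : Fin d → ℝ) (q : Fin dC → ℝ) (hp : IsProbVec p) (hq : IsProbVec q)
    (π : Equiv.Perm (Fin d × Fin dC))
    (hcat : margS (fun x => p (π.symm x).1 * q (π.symm x).2) = q) :
    shannonEntropy p ≤
      shannonEntropy (margC (fun x => p (π.symm x).1 * q (π.symm x).2)) := by
  set r : Fin d × Fin dC → ℝ := fun x => p (π.symm x).1 * q (π.symm x).2 with hrdef
  have hr : ∀ x, 0 ≤ r x := fun x => mul_nonneg (hp.1 _) (hq.1 _)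
  have hperm : ∑ x, r x = ∑ y : Fin d × Fin dC, p y.1 * q y.2 :=
    Equiv.sum_comp π.symm (fun y => p y.1 * q y.2)
  have hsum : ∑ x, r x = 1 := by
    rw [hperm, Fintype.sum_prod_type]
    simp [← Finset.mul_sum, hq.2, hp.2]
  have hHr : shannonEntropy r = shannonEntropy p + shannonEntropy q := by
    unfold shannonEntropy
    have : ∑ x, r x * Real.log (r x)
        = ∑ y : Fin d × Fin dC, (p y.1 * q y.2) * Real.log (p y.1 * q y.2) :=
      Equiv.sum_comp π.symm (fun y => (p y.1 * q y.2) * Real.log (p y.1 * q y.2))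
    rw [this, add_aux p q, hp.2, hq.2]; ring
  have hsub := subadd r hr hsum
  rw [hHr, hcat] at hsub
  linarith
end

section
/- Let ρ = diag(1/2, 1/2, 0) and ρ' = diag(2/3, 1/6, 1/6) be diagonal density matrices on ℂ³ with respect to the basis {|1⟩,|2⟩,|3⟩}, and let σ = diag(2/3, 1/3) on ℂ² with basis {|1⟩_C, |2⟩_C}. Let U be the unitary on ℂ³⊗ℂ² defined by U|2⟩⊗|1⟩_C = |1⟩⊗|2⟩_C, U|1⟩⊗|2⟩_C = |2⟩⊗|1⟩_C, U|3⟩⊗|1⟩_C = |2⟩⊗|2⟩_C, U|2⟩⊗|2⟩_C = |3⟩⊗|1⟩_C, and U fixing the remaining basis vectors |1⟩⊗|1⟩_C and |3⟩⊗|2⟩_C. Then Tr_C[U(ρ⊗σ)U†] = ρ' and Tr_S[U(ρ⊗σ)U†] = σ; i.e., U implements the exact catalytic transition ρ →₀ ρ' with a two-dimensional catalyst. -/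
open Matrix BigOperators
open scoped Kronecker ComplexOrder

/-- The permutation of basis vectors of ℂ³⊗ℂ² underlying the catalytic unitary:
|2⟩⊗|1⟩_C ↔ |1⟩⊗|2⟩_C and |3⟩⊗|1⟩_C ↔ |2⟩⊗|2⟩_C, all other basis vectors fixed
(indices counted from 0 here: (1,0) ↔ (0,1) and (2,0) ↔ (1,1)). -/
noncomputable def examplePerm : Equiv.Perm (Fin 3 × Fin 2) :=
  Equiv.swap ((1 : Fin 3), (0 : Fin 2)) ((0 : Fin 3), (1 : Fin 2)) *
    Equiv.swap ((2 : Fin 3), (0 : Fin 2)) ((1 : Fin 3), (1 : Fin 2))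

/-- The corresponding permutation unitary U on ℂ³⊗ℂ², with U|y⟩ = |examplePerm y⟩. -/
noncomputable def exampleUnitary : Matrix (Fin 3 × Fin 2) (Fin 3 × Fin 2) ℂ :=
  Matrix.of fun x y => if x = examplePerm y then (1 : ℂ) else 0


/-! `U` is a permutation matrix, so conjugating the diagonal state `ρ ⊗ σ` by it only permutes
the diagonal entries `ρᵢσₖ`. Both partial traces of a diagonal matrix are diagonal, with the row
(resp. column) sums of the 3 × 2 array of entries; after the permutation these sums are
`(2/3, 1/6, 1/6)` and `(2/3, 1/3)`. -/

namespace Matrix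

variable {n R : Type*} [DecidableEq n] [Fintype n]

theorem permMatrix_mem_unitaryGroup [CommRing R] [StarRing R] (σ : Equiv.Perm n) :
    σ.permMatrix R ∈ unitaryGroup n R := by
  rw [mem_unitaryGroup_iff, star_eq_conjTranspose, conjTranspose_permMatrix, ← permMatrix_mul,
    inv_mul_cancel, permMatrix_one]

theorem permMatrix_mul_mul_conjTranspose_permMatrix [NonAssocSemiring R] [StarRing R]
    (σ : Equiv.Perm n) (M : Matrix n n R) :
    σ.permMatrix R * M * (σ.permMatrix R)ᴴ = M.submatrix σ σ := by
  rw [conjTranspose_permMatrix, PEquiv.toMatrix_toPEquiv_mul, PEquiv.mul_toMatrix_toPEquiv]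
  rfl

end Matrix

section PartialTrace

variable {s c : Type*} [Fintype s] [Fintype c] [DecidableEq s] [DecidableEq c]

theorem ptraceC_diagonal (d : s × c → ℂ) :
    ptraceC (diagonal d) = diagonal fun i => ∑ k, d (i, k) := by
  ext i j
  by_cases h : i = j <;> simp [ptraceC, diagonal_apply, h]

theorem ptraceS_diagonal (d : s × c → ℂ) :
    ptraceS (diagonal d) = diagonal fun i => ∑ k, d (k, i) := by
  ext i j
  by_cases h : i = j <;> simp [ptraceS, diagonal_apply, h]

end PartialTrace

theorem exampleUnitary_eq_permMatrix : exampleUnitary = examplePerm⁻¹.permMatrix ℂ := by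
  ext x y
  simp [exampleUnitary, PEquiv.toMatrix_apply, Equiv.symm_apply_eq]

theorem exampleUnitary_conj_diagonal (d : Fin 3 × Fin 2 → ℂ) :
    exampleUnitary * diagonal d * exampleUnitaryᴴ = diagonal (d ∘ ⇑examplePerm⁻¹) := by
  rw [exampleUnitary_eq_permMatrix, permMatrix_mul_mul_conjTranspose_permMatrix]
  exact submatrix_diagonal_equiv d examplePerm⁻¹

/-- **An exact catalytic transition with a two-dimensional catalyst.** For
ρ = diag(1/2,1/2,0), ρ' = diag(2/3,1/6,1/6) and σ = diag(2/3,1/3), the permutation unitary U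
defined above satisfies Tr_C[U(ρ⊗σ)U†] = ρ' and Tr_S[U(ρ⊗σ)U†] = σ, i.e. it implements the
exact catalytic transition ρ →₀ ρ'. -/
theorem example_exact_catalytic_transition :
    exampleUnitary ∈ Matrix.unitaryGroup (Fin 3 × Fin 2) ℂ ∧
    ptraceC (exampleUnitary *
        ((Matrix.diagonal ![(1/2 : ℂ), 1/2, 0]) ⊗ₖ (Matrix.diagonal ![(2/3 : ℂ), 1/3])) *
        exampleUnitaryᴴ) = Matrix.diagonal ![(2/3 : ℂ), 1/6, 1/6] ∧
    ptraceS (exampleUnitary *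
        ((Matrix.diagonal ![(1/2 : ℂ), 1/2, 0]) ⊗ₖ (Matrix.diagonal ![(2/3 : ℂ), 1/3])) *
        exampleUnitaryᴴ) = Matrix.diagonal ![(2/3 : ℂ), 1/3] := by
  refine ⟨exampleUnitary_eq_permMatrix ▸ permMatrix_mem_unitaryGroup _, ?_, ?_⟩
  · rw [diagonal_kronecker_diagonal, exampleUnitary_conj_diagonal, ptraceC_diagonal]
    congr 1
    funext i
    fin_cases i <;> simp [Fin.sum_univ_two, examplePerm, Equiv.swap_apply_def] <;> norm_num
  · rw [diagonal_kronecker_diagonal, exampleUnitary_conj_diagonal, ptraceS_diagonal]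
    congr 1
    funext i
    fin_cases i <;> simp [Fin.sum_univ_three, examplePerm, Equiv.swap_apply_def] <;> norm_num
end
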